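/- Let s ≥ 0. There exists a constant C > 0 depending only on s such that for every real λ ≠ 0 and every absolutely continuous u : ℝ → ℂ with ⟨x⟩^s u ∈ L²(ℝ) and ⟨x⟩^s u' ∈ L²(ℝ), one has ‖u'‖_{L²_s} ≤ (C (1+|λ|) / (|λ| · (min(|λ|,1))^s)) · ‖u' − λu‖_{L²_s}. -/

import Mathlib

open MeasureTheory Real

/-- The Japanese bracket `⟨x⟩ = √(1 + x²)`. -/
noncomputable def jap (x : ℝ) : ℝ := Real.sqrt (1 + x ^ 2)

/-!
Write `w = ⟨x⟩^{2s} = (1 + x²)^s`. Expanding `‖u' - λu‖²` and integrating the cross term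
`2 w Re(ū u') = w (|u|²)'` by parts gives the identity
`‖u' - λu‖²_s = ‖u'‖²_s + λ² ‖u‖²_s + λ ∫ w' |u|²`; there are no boundary terms because `w |u|²` and
its derivative are integrable. Since `|w'| ≤ 2s ⟨x⟩^{2s-1} ≤ 2s (ε ⟨x⟩^{2s} + ε^{-2s})`, the choice
`ε = min(|λ|, 1) / (2s + 1)` absorbs the first part into `λ² ‖u‖²_s`, and the unweighted remainder
`‖u‖²_0` is at most `λ⁻² ‖u' - λu‖²_0`, by the same identity with `s = 0`.
-/

open Filter Topology Set
open scoped RealInnerProductSpace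

section Primitive

variable {E : Type*} [NormedAddCommGroup E] [NormedSpace ℝ E] {f g : ℝ → E}

theorem eq_add_integral_of_forall_sub_eq_integral (hf : ∀ x y, f y - f x = ∫ t in x..y, g t)
    (c : ℝ) : f = fun x => f c + ∫ t in c..x, g t := by
  funext x
  rw [← hf c x, add_sub_cancel]

theorem continuous_of_forall_sub_eq_integral (hg : LocallyIntegrable g)
    (hf : ∀ x y, f y - f x = ∫ t in x..y, g t) : Continuous f := by
  rw [eq_add_integral_of_forall_sub_eq_integral hf 0]
  exact continuous_const.add <| intervalIntegral.continuous_primitive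
    (fun a b => (hg.integrableOn_isCompact isCompact_uIcc).intervalIntegrable) 0

theorem ae_hasDerivAt_of_forall_sub_eq_integral [CompleteSpace E] (hg : LocallyIntegrable g)
    (hf : ∀ x y, f y - f x = ∫ t in x..y, g t) : ∀ᵐ x, HasDerivAt f (g x) x := by
  filter_upwards [_root_.LocallyIntegrable.ae_hasDerivAt_integral hg] with x hx
  rw [eq_add_integral_of_forall_sub_eq_integral hf 0]
  exact (hx 0).const_add _

theorem tendsto_atTop_of_forall_sub_eq_integral (hg : Integrable g)
    (hf : ∀ x y, f y - f x = ∫ t in x..y, g t) :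
    Tendsto f atTop (𝓝 (f 0 + ∫ x in Ioi 0, g x)) :=
  ((intervalIntegral_tendsto_integral_Ioi 0 hg.integrableOn tendsto_id).const_add (f 0)).congr
    fun b => by simp [← hf]

theorem tendsto_atBot_of_forall_sub_eq_integral (hg : Integrable g)
    (hf : ∀ x y, f y - f x = ∫ t in x..y, g t) :
    Tendsto f atBot (𝓝 (f 0 - ∫ x in Iic 0, g x)) :=
  ((intervalIntegral_tendsto_integral_Iic 0 hg.integrableOn tendsto_id).const_sub (f 0)).congr
    fun b => by simp [← hf]

/-- `f` has limits at `±∞`, and an integrable function can only tend to `0`. -/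
theorem integral_eq_zero_of_forall_sub_eq_integral (hf_int : Integrable f) (hg : Integrable g)
    (hf : ∀ x y, f y - f x = ∫ t in x..y, g t) : ∫ x, g x = 0 := by
  have htop := tendsto_atTop_of_forall_sub_eq_integral hg hf
  have hbot := tendsto_atBot_of_forall_sub_eq_integral hg hf
  rw [(hf_int.integrableAtFilter atTop).eq_zero_of_tendsto (fun s hs => ?_) htop] at htop
  rw [(hf_int.integrableAtFilter atBot).eq_zero_of_tendsto (fun s hs => ?_) hbot] at hbot
  · refine tendsto_nhds_unique
      (intervalIntegral_tendsto_integral hg tendsto_neg_atTop_atBot tendsto_id) ?_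
    simpa [hf] using htop.sub (hbot.comp tendsto_neg_atTop_atBot)
  · obtain ⟨b, hb⟩ := mem_atBot_sets.mp hs
    exact measure_mono_top (s₁ := Iic b) hb volume_Iic
  · obtain ⟨b, hb⟩ := mem_atTop_sets.mp hs
    exact measure_mono_top (s₁ := Ici b) hb volume_Ici

end Primitive

theorem absolutelyContinuousOnInterval_of_forall_sub_eq_integral {f g : ℝ → ℝ}
    (hg : LocallyIntegrable g) (hf : ∀ x y, f y - f x = ∫ t in x..y, g t) (a b : ℝ) :
    AbsolutelyContinuousOnInterval f a b := by
  rw [eq_add_integral_of_forall_sub_eq_integral hf a]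
  exact contDiffOn_const.absolutelyContinuousOnInterval.fun_add
    ((hg.integrableOn_isCompact isCompact_uIcc).intervalIntegrable
      |>.absolutelyContinuousOnInterval_intervalIntegral left_mem_uIcc)

theorem absolutelyContinuousOnInterval_norm_sq {u u' : ℝ → ℂ} (hu' : LocallyIntegrable u')
    (hu : ∀ x y, u y - u x = ∫ t in x..y, u' t) (a b : ℝ) :
    AbsolutelyContinuousOnInterval (fun x => ‖u x‖ ^ 2) a b := by
  have hint x y : IntervalIntegrable u' volume x y :=
    (hu'.integrableOn_isCompact isCompact_uIcc).intervalIntegrable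
  have hre : AbsolutelyContinuousOnInterval (fun x => (u x).re) a b :=
    absolutelyContinuousOnInterval_of_forall_sub_eq_integral
      (fun x => Complex.reCLM.integrableAtFilter_comp (hu' x)) (fun x y => by
        rw [← Complex.sub_re, hu]
        exact (Complex.reCLM.intervalIntegral_comp_comm (hint x y)).symm) a b
  have him : AbsolutelyContinuousOnInterval (fun x => (u x).im) a b :=
    absolutelyContinuousOnInterval_of_forall_sub_eq_integral
      (fun x => Complex.imCLM.integrableAtFilter_comp (hu' x)) (fun x y => by
        rw [← Complex.sub_im, hu]
        exact (Complex.imCLM.intervalIntegral_comp_comm (hint x y)).symm) a b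
  simp_rw [Complex.sq_norm, Complex.normSq_apply]
  exact (hre.fun_mul hre).fun_add (him.fun_mul him)

section WeightedIdentity

variable {w w' : ℝ → ℝ} {u u' : ℝ → ℂ}

theorem sub_eq_intervalIntegral_deriv_mul_norm_sq (hw : ∀ x, HasDerivAt w (w' x) x)
    (hw' : Continuous w') (hu' : LocallyIntegrable u') (hu : ∀ x y, u y - u x = ∫ t in x..y, u' t)
    (a b : ℝ) :
    w b * ‖u b‖ ^ 2 - w a * ‖u a‖ ^ 2 =
      ∫ x in a..b, (w' x * ‖u x‖ ^ 2 + w x * (2 * ⟪u x, u' x⟫)) := by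
  have hw_ac : AbsolutelyContinuousOnInterval w a b :=
    absolutelyContinuousOnInterval_of_forall_sub_eq_integral hw'.locallyIntegrable
      (fun x y => (intervalIntegral.integral_eq_sub_of_hasDerivAt (fun t _ => hw t)
        (hw'.intervalIntegrable x y)).symm) a b
  rw [← (hw_ac.fun_mul (absolutelyContinuousOnInterval_norm_sq hu' hu a b)).integral_deriv_eq_sub]
  refine intervalIntegral.integral_congr_ae ?_
  filter_upwards [ae_hasDerivAt_of_forall_sub_eq_integral hu' hu] with x hx _
  exact ((hw x).mul hx.norm_sq).deriv

theorem integrable_mul_inner (hw : Continuous w) (hw0 : ∀ x, 0 ≤ w x) (hu : Continuous u)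
    (hu' : AEStronglyMeasurable u') (hwu : Integrable fun x => w x * ‖u x‖ ^ 2)
    (hwu' : Integrable fun x => w x * ‖u' x‖ ^ 2) :
    Integrable fun x => w x * (2 * ⟪u x, u' x⟫) := by
  refine (hwu.add hwu').mono' (hw.aestronglyMeasurable.mul
    (aestronglyMeasurable_const.mul (hu.aestronglyMeasurable.inner hu')))
    (Eventually.of_forall fun x => ?_)
  have h2 : 2 * |⟪u x, u' x⟫| ≤ ‖u x‖ ^ 2 + ‖u' x‖ ^ 2 := by
    nlinarith [abs_real_inner_le_norm (u x) (u' x), sq_nonneg (‖u x‖ - ‖u' x‖)]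
  rw [norm_mul, Real.norm_of_nonneg (hw0 x), norm_mul, Real.norm_two, Real.norm_eq_abs,
    Pi.add_apply]
  linarith [mul_le_mul_of_nonneg_left h2 (hw0 x)]

theorem integral_mul_norm_sub_mul_sq (hw : ∀ x, HasDerivAt w (w' x) x) (hw' : Continuous w')
    (hw0 : ∀ x, 0 ≤ w x) (hu' : LocallyIntegrable u') (hu : ∀ x y, u y - u x = ∫ t in x..y, u' t)
    (hwu : Integrable fun x => w x * ‖u x‖ ^ 2) (hwu' : Integrable fun x => w x * ‖u' x‖ ^ 2)
    (hw'u : Integrable fun x => w' x * ‖u x‖ ^ 2) (lam : ℝ) :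
    ∫ x, w x * ‖u' x - (lam : ℂ) * u x‖ ^ 2 =
      (∫ x, w x * ‖u' x‖ ^ 2) + lam ^ 2 * (∫ x, w x * ‖u x‖ ^ 2) + lam * ∫ x, w' x * ‖u x‖ ^ 2 := by
  have hderiv : Integrable fun x => w' x * ‖u x‖ ^ 2 + w x * (2 * ⟪u x, u' x⟫) :=
    hw'u.add <| integrable_mul_inner (continuous_iff_continuousAt.mpr fun x => (hw x).continuousAt)
      hw0 (continuous_of_forall_sub_eq_integral hu' hu) hu'.aestronglyMeasurable hwu hwu'
  have hzero : ∫ x, (w' x * ‖u x‖ ^ 2 + w x * (2 * ⟪u x, u' x⟫)) = 0 :=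
    integral_eq_zero_of_forall_sub_eq_integral hwu hderiv
      (sub_eq_intervalIntegral_deriv_mul_norm_sq hw hw' hu' hu)
  have hpt : ∀ x, w x * ‖u' x - (lam : ℂ) * u x‖ ^ 2 =
      w x * ‖u' x‖ ^ 2 + lam ^ 2 * (w x * ‖u x‖ ^ 2) + lam * (w' x * ‖u x‖ ^ 2)
        - lam * (w' x * ‖u x‖ ^ 2 + w x * (2 * ⟪u x, u' x⟫)) := fun x => by
    rw [← Complex.real_smul, norm_sub_sq_real, norm_smul, real_inner_smul_right,
      real_inner_comm, Real.norm_eq_abs, mul_pow, sq_abs]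
    ring
  have h1 : Integrable fun x => w x * ‖u' x‖ ^ 2 + lam ^ 2 * (w x * ‖u x‖ ^ 2) :=
    hwu'.add (hwu.const_mul _)
  have h2 : Integrable fun x =>
      w x * ‖u' x‖ ^ 2 + lam ^ 2 * (w x * ‖u x‖ ^ 2) + lam * (w' x * ‖u x‖ ^ 2) :=
    h1.add (hw'u.const_mul _)
  simp_rw [hpt]
  rw [integral_sub h2 (hderiv.const_mul _), integral_add h1 (hw'u.const_mul _),
    integral_add hwu' (hwu.const_mul _), integral_const_mul, integral_const_mul, integral_const_mul,
    hzero, mul_zero, sub_zero]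

theorem integral_norm_sub_mul_sq (hu' : LocallyIntegrable u')
    (hu : ∀ x y, u y - u x = ∫ t in x..y, u' t) (hN : Integrable fun x => ‖u x‖ ^ 2)
    (hN' : Integrable fun x => ‖u' x‖ ^ 2) (lam : ℝ) :
    ∫ x, ‖u' x - (lam : ℂ) * u x‖ ^ 2 = (∫ x, ‖u' x‖ ^ 2) + lam ^ 2 * ∫ x, ‖u x‖ ^ 2 := by
  simpa using integral_mul_norm_sub_mul_sq (w := fun _ => 1) (w' := fun _ => 0)
    (fun x => hasDerivAt_const x 1) continuous_const (fun _ => zero_le_one) hu' hu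
    (by simpa using hN) (by simpa using hN') (by simp) lam

end WeightedIdentity

section PolynomialWeight

theorem hasDerivAt_one_add_sq_rpow (s x : ℝ) :
    HasDerivAt (fun x => (1 + x ^ 2) ^ s) (2 * x * s * (1 + x ^ 2) ^ (s - 1)) x := by
  have h : HasDerivAt (fun x : ℝ => 1 + x ^ 2) (2 * x) x := by
    simpa using (hasDerivAt_pow 2 x).const_add 1
  exact h.rpow_const (Or.inl (by positivity))

theorem continuous_deriv_one_add_sq_rpow (s : ℝ) :
    Continuous fun x : ℝ => 2 * x * s * (1 + x ^ 2) ^ (s - 1) :=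
  (continuous_const.mul continuous_id |>.mul continuous_const).mul
    ((continuous_const.add (continuous_pow 2)).rpow_const fun x =>
      Or.inl (by positivity : (1 : ℝ) + x ^ 2 ≠ 0))

theorem rpow_sub_half_le_mul_rpow_add {y s ε : ℝ} (hy : 1 ≤ y) (hs : 0 ≤ s) (hε : 0 < ε) :
    y ^ (s - 1 / 2) ≤ ε * y ^ s + ε ^ (-(2 * s)) := by
  have hy0 : 0 < y := by linarith
  rcases le_or_gt ε⁻¹ (y ^ (1 / 2 : ℝ)) with hbig | hsmall
  · have : y ^ (s - 1 / 2) ≤ ε * y ^ s := calc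
      y ^ (s - 1 / 2) = y ^ s * (y ^ (1 / 2 : ℝ))⁻¹ := by rw [rpow_sub hy0, div_eq_mul_inv]
      _ ≤ y ^ s * ε := by gcongr; exact inv_le_of_inv_le₀ hε hbig
      _ = ε * y ^ s := mul_comm _ _
    linarith [rpow_nonneg hε.le (-(2 * s))]
  · have : y ^ (s - 1 / 2) ≤ ε ^ (-(2 * s)) := calc
      y ^ (s - 1 / 2) ≤ y ^ s := rpow_le_rpow_of_exponent_le hy (by linarith)
      _ = (y ^ (1 / 2 : ℝ)) ^ (2 * s) := by rw [← rpow_mul hy0.le]; ring_nf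
      _ ≤ ε⁻¹ ^ (2 * s) := by gcongr
      _ = ε ^ (-(2 * s)) := by rw [inv_rpow hε.le, rpow_neg hε.le]
    linarith [mul_nonneg hε.le (rpow_nonneg hy0.le s)]

theorem abs_deriv_one_add_sq_rpow_le {x s ε : ℝ} (hs : 0 ≤ s) (hε : 0 < ε) :
    |2 * x * s * (1 + x ^ 2) ^ (s - 1)| ≤ 2 * s * (ε * (1 + x ^ 2) ^ s + ε ^ (-(2 * s))) := by
  have hy : 1 ≤ 1 + x ^ 2 := by nlinarith
  have habs : |x| ≤ (1 + x ^ 2) ^ (1 / 2 : ℝ) := by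
    rw [← sqrt_eq_rpow, ← sqrt_sq_eq_abs]
    exact sqrt_le_sqrt (by linarith)
  calc |2 * x * s * (1 + x ^ 2) ^ (s - 1)| = 2 * s * (|x| * (1 + x ^ 2) ^ (s - 1)) := by
        rw [abs_mul, abs_mul, abs_mul, abs_two, abs_of_nonneg hs,
          abs_of_nonneg (rpow_nonneg (by linarith) _)]
        ring
    _ ≤ 2 * s * ((1 + x ^ 2) ^ (1 / 2 : ℝ) * (1 + x ^ 2) ^ (s - 1)) := by gcongr
    _ = 2 * s * (1 + x ^ 2) ^ (s - 1 / 2) := by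
        rw [← rpow_add (by linarith)]; ring_nf
    _ ≤ 2 * s * (ε * (1 + x ^ 2) ^ s + ε ^ (-(2 * s))) := by
        gcongr; exact rpow_sub_half_le_mul_rpow_add hy hs hε

variable {s : ℝ} {v : ℝ → ℂ}

theorem norm_deriv_one_add_sq_rpow_mul_le {ε : ℝ} (hs : 0 ≤ s) (hε : 0 < ε) (x : ℝ) :
    ‖2 * x * s * (1 + x ^ 2) ^ (s - 1) * ‖v x‖ ^ 2‖ ≤
      2 * s * (ε * ((1 + x ^ 2) ^ s * ‖v x‖ ^ 2) + ε ^ (-(2 * s)) * ‖v x‖ ^ 2) := by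
  rw [norm_mul, Real.norm_eq_abs, Real.norm_of_nonneg (by positivity)]
  calc _ ≤ 2 * s * (ε * (1 + x ^ 2) ^ s + ε ^ (-(2 * s))) * ‖v x‖ ^ 2 :=
        mul_le_mul_of_nonneg_right (abs_deriv_one_add_sq_rpow_le hs hε) (by positivity)
    _ = _ := by ring

theorem integrable_norm_sq_of_integrable_one_add_sq_rpow_mul (hs : 0 ≤ s)
    (hv : AEStronglyMeasurable v) (hwv : Integrable fun x => (1 + x ^ 2) ^ s * ‖v x‖ ^ 2) :
    Integrable fun x => ‖v x‖ ^ 2 :=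
  hwv.mono' (hv.norm.pow 2) (Eventually.of_forall fun x => by
    rw [Real.norm_of_nonneg (by positivity)]
    exact le_mul_of_one_le_left (by positivity) (one_le_rpow (by nlinarith) hs))

theorem integrable_deriv_one_add_sq_rpow_mul (hs : 0 ≤ s) (hv : Continuous v)
    (hwv : Integrable fun x => (1 + x ^ 2) ^ s * ‖v x‖ ^ 2) :
    Integrable fun x => 2 * x * s * (1 + x ^ 2) ^ (s - 1) * ‖v x‖ ^ 2 := by
  have hN := integrable_norm_sq_of_integrable_one_add_sq_rpow_mul hs hv.aestronglyMeasurable hwv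
  have hg : Integrable fun x => 1 * ((1 + x ^ 2) ^ s * ‖v x‖ ^ 2) + 1 ^ (-(2 * s)) * ‖v x‖ ^ 2 :=
    (hwv.const_mul 1).add (hN.const_mul _)
  exact (hg.const_mul (2 * s)).mono' (by fun_prop)
    (Eventually.of_forall (norm_deriv_one_add_sq_rpow_mul_le hs one_pos))

theorem abs_integral_deriv_one_add_sq_rpow_mul_le {ε : ℝ} (hs : 0 ≤ s) (hε : 0 < ε)
    (hwv : Integrable fun x => (1 + x ^ 2) ^ s * ‖v x‖ ^ 2)
    (hN : Integrable fun x => ‖v x‖ ^ 2) :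
    |∫ x, 2 * x * s * (1 + x ^ 2) ^ (s - 1) * ‖v x‖ ^ 2| ≤
      2 * s * (ε * (∫ x, (1 + x ^ 2) ^ s * ‖v x‖ ^ 2) + ε ^ (-(2 * s)) * ∫ x, ‖v x‖ ^ 2) := by
  have hg : Integrable fun x => ε * ((1 + x ^ 2) ^ s * ‖v x‖ ^ 2) + ε ^ (-(2 * s)) * ‖v x‖ ^ 2 :=
    (hwv.const_mul ε).add (hN.const_mul _)
  refine (norm_integral_le_of_norm_le (hg.const_mul _)
    (Eventually.of_forall (norm_deriv_one_add_sq_rpow_mul_le hs hε))).trans_eq ?_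
  rw [integral_const_mul, integral_add (hwv.const_mul _) (hN.const_mul _), integral_const_mul,
    integral_const_mul]

end PolynomialWeight

section Estimate

variable {s lam : ℝ} {u u' : ℝ → ℂ}

theorem weighted_norm_deriv_sq_add_le {ε : ℝ} (hs : 0 ≤ s) (hε : 0 < ε)
    (hu' : LocallyIntegrable u') (hu : ∀ x y, u y - u x = ∫ t in x..y, u' t)
    (hwu : Integrable fun x => (1 + x ^ 2) ^ s * ‖u x‖ ^ 2)
    (hwu' : Integrable fun x => (1 + x ^ 2) ^ s * ‖u' x‖ ^ 2) :
    (∫ x, (1 + x ^ 2) ^ s * ‖u' x‖ ^ 2) + lam ^ 2 * ∫ x, (1 + x ^ 2) ^ s * ‖u x‖ ^ 2 ≤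
      (∫ x, (1 + x ^ 2) ^ s * ‖u' x - (lam : ℂ) * u x‖ ^ 2) +
        2 * s * |lam| * (ε * (∫ x, (1 + x ^ 2) ^ s * ‖u x‖ ^ 2) +
          ε ^ (-(2 * s)) * ∫ x, ‖u x‖ ^ 2) := by
  have huc : Continuous u := continuous_of_forall_sub_eq_integral hu' hu
  have hI := mul_le_mul_of_nonneg_left (abs_integral_deriv_one_add_sq_rpow_mul_le hs hε hwu
    (integrable_norm_sq_of_integrable_one_add_sq_rpow_mul hs huc.aestronglyMeasurable hwu))
    (abs_nonneg lam)
  rw [← abs_mul] at hI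
  rw [integral_mul_norm_sub_mul_sq (hasDerivAt_one_add_sq_rpow s)
    (continuous_deriv_one_add_sq_rpow s) (fun x => by positivity) hu' hu hwu hwu'
    (integrable_deriv_one_add_sq_rpow_mul hs huc hwu) lam]
  linarith [neg_abs_le (lam * ∫ x, 2 * x * s * (1 + x ^ 2) ^ (s - 1) * ‖u x‖ ^ 2)]

theorem sq_mul_integral_norm_sq_le (hs : 0 ≤ s) (hu' : LocallyIntegrable u')
    (hu : ∀ x y, u y - u x = ∫ t in x..y, u' t)
    (hwu : Integrable fun x => (1 + x ^ 2) ^ s * ‖u x‖ ^ 2)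
    (hwu' : Integrable fun x => (1 + x ^ 2) ^ s * ‖u' x‖ ^ 2)
    (hwf : Integrable fun x => (1 + x ^ 2) ^ s * ‖u' x - (lam : ℂ) * u x‖ ^ 2) :
    lam ^ 2 * ∫ x, ‖u x‖ ^ 2 ≤ ∫ x, (1 + x ^ 2) ^ s * ‖u' x - (lam : ℂ) * u x‖ ^ 2 := by
  have huc : Continuous u := continuous_of_forall_sub_eq_integral hu' hu
  have hNf := integrable_norm_sq_of_integrable_one_add_sq_rpow_mul hs
    (hu'.aestronglyMeasurable.sub (huc.aestronglyMeasurable.const_mul _)) hwf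
  have hff : ∫ x, ‖u' x - (lam : ℂ) * u x‖ ^ 2 ≤
      ∫ x, (1 + x ^ 2) ^ s * ‖u' x - (lam : ℂ) * u x‖ ^ 2 :=
    integral_mono hNf hwf fun x =>
      le_mul_of_one_le_left (by positivity) (one_le_rpow (by nlinarith) hs)
  have := integral_norm_sub_mul_sq hu' hu
    (integrable_norm_sq_of_integrable_one_add_sq_rpow_mul hs huc.aestronglyMeasurable hwu)
    (integrable_norm_sq_of_integrable_one_add_sq_rpow_mul hs hu'.aestronglyMeasurable hwu') lam
  linarith [(integral_nonneg fun x => sq_nonneg ‖u' x‖ : 0 ≤ ∫ x, ‖u' x‖ ^ 2)]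

theorem weighted_norm_deriv_sq_le (hs : 0 ≤ s) (hlam : lam ≠ 0)
    (hu' : LocallyIntegrable u') (hu : ∀ x y, u y - u x = ∫ t in x..y, u' t)
    (hwu : Integrable fun x => (1 + x ^ 2) ^ s * ‖u x‖ ^ 2)
    (hwu' : Integrable fun x => (1 + x ^ 2) ^ s * ‖u' x‖ ^ 2)
    (hwf : Integrable fun x => (1 + x ^ 2) ^ s * ‖u' x - (lam : ℂ) * u x‖ ^ 2) :
    ∫ x, (1 + x ^ 2) ^ s * ‖u' x‖ ^ 2 ≤
      (1 + 2 * s * (2 * s + 1) ^ (2 * s) / (|lam| * (min |lam| 1) ^ (2 * s))) *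
        ∫ x, (1 + x ^ 2) ^ s * ‖u' x - (lam : ℂ) * u x‖ ^ 2 := by
  set m := min |lam| 1
  have hl : 0 < |lam| := abs_pos.mpr hlam
  have hm : 0 < m := lt_min hl one_pos
  set ε := m / (2 * s + 1)
  have hε : 0 < ε := by positivity
  have hεl : 2 * s * |lam| * ε ≤ lam ^ 2 := by
    have h2sε : 2 * s * ε ≤ m := by
      rw [← mul_div_assoc, div_le_iff₀ (by positivity)]
      nlinarith
    calc 2 * s * |lam| * ε = |lam| * (2 * s * ε) := by ring
      _ ≤ |lam| * |lam| := by gcongr; exact h2sε.trans (min_le_left _ _)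
      _ = lam ^ 2 := by rw [← sq, sq_abs]
  have henergy := weighted_norm_deriv_sq_add_le (lam := lam) hs hε hu' hu hwu hwu'
  have habsorb := mul_le_mul_of_nonneg_right hεl
    (integral_nonneg fun x => by positivity : 0 ≤ ∫ x, (1 + x ^ 2) ^ s * ‖u x‖ ^ 2)
  have hremainder := mul_le_mul_of_nonneg_left (sq_mul_integral_norm_sq_le hs hu' hu hwu hwu' hwf)
    (by positivity : 0 ≤ 2 * s * (2 * s + 1) ^ (2 * s) / (|lam| * m ^ (2 * s)))
  have hεpow : ε ^ (-(2 * s)) = (2 * s + 1) ^ (2 * s) / m ^ (2 * s) := by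
    rw [rpow_neg (by positivity), div_rpow hm.le (by positivity), inv_div]
  have hcoeff : 2 * s * |lam| * (ε ^ (-(2 * s)) * ∫ x, ‖u x‖ ^ 2) =
      2 * s * (2 * s + 1) ^ (2 * s) / (|lam| * m ^ (2 * s)) * (lam ^ 2 * ∫ x, ‖u x‖ ^ 2) := by
    rw [hεpow, ← sq_abs lam]
    field_simp
  linarith

end Estimate

theorem one_add_div_mul_rpow_le_sq {c l m s : ℝ} (hc : 0 ≤ c) (hl : 0 < l) (hm0 : 0 < m)
    (hm1 : m ≤ 1) (hs : 0 ≤ s) :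
    1 + c / (l * m ^ (2 * s)) ≤ (√(1 + c) * (1 + l) / (l * m ^ s)) ^ 2 := by
  have hP : 0 < m ^ (2 * s) := rpow_pos_of_pos hm0 _
  have hP1 : m ^ (2 * s) ≤ 1 := rpow_le_one hm0.le hm1 (by linarith)
  calc 1 + c / (l * m ^ (2 * s)) = (l ^ 2 * m ^ (2 * s) + c * l) / (l ^ 2 * m ^ (2 * s)) := by
        field_simp
    _ ≤ (1 + c) * (1 + l) ^ 2 / (l ^ 2 * m ^ (2 * s)) := by
        gcongr
        nlinarith [mul_le_mul_of_nonneg_left hP1 (sq_nonneg l)]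
    _ = (√(1 + c) * (1 + l) / (l * m ^ s)) ^ 2 := by
        rw [div_pow, mul_pow, mul_pow, sq_sqrt (by linarith), ← rpow_natCast (m ^ s),
          ← rpow_mul hm0.le]
        norm_num [mul_comm]

theorem jap_rpow_two_mul (s x : ℝ) : jap x ^ (2 * s) = (1 + x ^ 2) ^ s := by
  rw [jap, sqrt_eq_rpow, ← rpow_mul (by positivity)]
  ring_nf

theorem jap_rpow_sq (s x : ℝ) : (jap x ^ s) ^ 2 = (1 + x ^ 2) ^ s := by
  rw [← rpow_natCast, ← rpow_mul (x := jap x) (sqrt_nonneg _), mul_comm, Nat.cast_ofNat,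
    jap_rpow_two_mul]

theorem integrable_one_add_sq_rpow_mul_norm_sq_of_memLp {s : ℝ} {v : ℝ → ℂ}
    (hv : MemLp (fun x => (jap x ^ s : ℝ) • v x) 2) :
    Integrable fun x => (1 + x ^ 2) ^ s * ‖v x‖ ^ 2 :=
  ((memLp_two_iff_integrable_sq_norm hv.1).mp hv).congr (Eventually.of_forall fun x => by
    dsimp only
    rw [norm_smul, mul_pow, Real.norm_eq_abs, sq_abs, jap_rpow_sq])

theorem memLp_of_memLp_jap_rpow_smul {s : ℝ} (hs : 0 ≤ s) {v : ℝ → ℂ}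
    (hv : MemLp (fun x => (jap x ^ s : ℝ) • v x) 2) : MemLp v 2 := by
  have hjap : ∀ x, 1 ≤ jap x ^ s := fun x =>
    one_le_rpow (one_le_sqrt.mpr (by nlinarith)) hs
  have hmeas : AEStronglyMeasurable v := by
    have hcont : Continuous fun x => (jap x ^ s)⁻¹ :=
      ((continuous_const.add (continuous_pow 2)).sqrt.rpow_const fun x =>
        Or.inr hs).inv₀ fun x => (zero_lt_one.trans_le (hjap x)).ne'
    refine (hcont.aestronglyMeasurable.smul hv.1).congr (Eventually.of_forall fun x => ?_)
    rw [Pi.smul_apply', smul_smul, inv_mul_cancel₀ (zero_lt_one.trans_le (hjap x)).ne', one_smul]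
  refine hv.of_le hmeas (Eventually.of_forall fun x => ?_)
  rw [norm_smul, Real.norm_of_nonneg (zero_le_one.trans (hjap x))]
  exact le_mul_of_one_le_left (norm_nonneg _) (hjap x)

/-- For `s ≥ 0` there is `C > 0` depending only on `s` such that for every real `λ ≠ 0` and
every absolutely continuous `u` with `⟨x⟩^s u ∈ L²` and `⟨x⟩^s u' ∈ L²`,
`‖u'‖_{L²_s} ≤ (C (1+|λ|) / (|λ| (min(|λ|,1))^s)) ‖u' − λu‖_{L²_s}`. -/
theorem weighted_derivative_estimate_real_lambda
    (s : ℝ) (hs : 0 ≤ s) :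
    ∃ C > 0, ∀ (lam : ℝ), lam ≠ 0 →
      ∀ (u u' : ℝ → ℂ),
        MemLp (fun x => (jap x ^ s : ℝ) • u x) 2 (volume : Measure ℝ) →
        MemLp (fun x => (jap x ^ s : ℝ) • u' x) 2 (volume : Measure ℝ) →
        (∀ x y : ℝ, u y - u x = ∫ t in x..y, u' t) →
        Real.sqrt (∫ x : ℝ, jap x ^ (2 * s) * ‖u' x‖ ^ 2)
          ≤ C * (1 + |lam|) / (|lam| * (min |lam| 1) ^ s) *
            Real.sqrt (∫ x : ℝ, jap x ^ (2 * s) * ‖u' x - (lam : ℂ) * u x‖ ^ 2) := by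
  refine ⟨√(1 + 2 * s * (2 * s + 1) ^ (2 * s)), by positivity, fun lam hlam u u' hu hu' hFTC => ?_⟩
  have hf : MemLp (fun x => (jap x ^ s : ℝ) • (u' x - (lam : ℂ) * u x)) 2 :=
    (hu'.sub (hu.const_smul (lam : ℂ))).ae_eq (Eventually.of_forall fun x => by
      simp [smul_sub, mul_left_comm])
  have hl : 0 < |lam| := abs_pos.mpr hlam
  have hbound := (weighted_norm_deriv_sq_le hs hlam
    ((memLp_of_memLp_jap_rpow_smul hs hu').locallyIntegrable one_le_two) hFTC
    (integrable_one_add_sq_rpow_mul_norm_sq_of_memLp hu)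
    (integrable_one_add_sq_rpow_mul_norm_sq_of_memLp hu')
    (integrable_one_add_sq_rpow_mul_norm_sq_of_memLp hf)).trans <|
      mul_le_mul_of_nonneg_right (one_add_div_mul_rpow_le_sq (by positivity) hl
        (lt_min hl one_pos) (min_le_right _ _) hs) (integral_nonneg fun x => by positivity)
  simp_rw [jap_rpow_two_mul]
  calc √(∫ x, (1 + x ^ 2) ^ s * ‖u' x‖ ^ 2)
      ≤ √((√(1 + 2 * s * (2 * s + 1) ^ (2 * s)) * (1 + |lam|) / (|lam| * min |lam| 1 ^ s)) ^ 2 *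
          ∫ x, (1 + x ^ 2) ^ s * ‖u' x - (lam : ℂ) * u x‖ ^ 2) := sqrt_le_sqrt hbound
    _ = _ := by rw [sqrt_mul (sq_nonneg _), sqrt_sq (by positivity)]
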